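/- arXiv:2308.04107 — 5 statements merged into one kernel-verified Lean document; each statement's English description precedes it below -/
import Mathlib

section
/- Let u, v, q : ℝ × ℝ → ℝ be C^∞ functions of (T,Y) satisfying for all (T,Y) the relation ∂_Y u = (1/2)·q·sin v·cos²(v/2). If at a point (T₀,Y₀) one has v(T₀,Y₀) = π and ∂_Y v(T₀,Y₀) = 0, then the iterated partial derivatives ∂_Y^k u(T₀,Y₀) vanish for every k = 1, 2, 3, 4, 5. -/
open Real

/-- Partial derivative in the first variable `T`. -/
noncomputable def pT (f : ℝ × ℝ → ℝ) (p : ℝ × ℝ) : ℝ :=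
  deriv (fun s => f (s, p.2)) p.1

/-- Partial derivative in the second variable `Y`. -/
noncomputable def pY (f : ℝ × ℝ → ℝ) (p : ℝ × ℝ) : ℝ :=
  deriv (fun y => f (p.1, y)) p.2

/-- The "weighted ideal" generated by monomials `c · φ^a · (φ')^b` with
`2a + b ≥ n`, where `c` ranges over smooth functions. -/
inductive Idl (φ : ℝ → ℝ) : ℕ → (ℝ → ℝ) → Prop
  | gen (c : ℝ → ℝ) (hc : ContDiff ℝ (⊤ : ℕ∞) c) (a b n : ℕ) (hn : n ≤ 2 * a + b) :
      Idl φ n (fun y => c y * φ y ^ a * (deriv φ y) ^ b)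
  | add {n : ℕ} {f g : ℝ → ℝ} : Idl φ n f → Idl φ n g →
      Idl φ n (fun y => f y + g y)

lemma one_le_inftyCoe : (1 : WithTop ℕ∞) ≤ ((⊤ : ℕ∞) : WithTop ℕ∞) := by
  exact_mod_cast le_top

lemma Idl.congr' {φ : ℝ → ℝ} {n : ℕ} {f g : ℝ → ℝ} (h : Idl φ n f) (e : f = g) :
    Idl φ n g := e ▸ h

lemma Idl.zero (φ : ℝ → ℝ) (n : ℕ) : Idl φ n (fun _ => (0 : ℝ)) :=
  (Idl.gen (fun _ => (0:ℝ)) contDiff_const n 0 n (by omega)).congr' (by funext y; simp)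

lemma Idl.smooth {φ : ℝ → ℝ} (hφ : ContDiff ℝ (⊤ : ℕ∞) φ) {n : ℕ} {f : ℝ → ℝ}
    (h : Idl φ n f) : ContDiff ℝ (⊤ : ℕ∞) f := by
  induction h with
  | gen c hc a b m hm =>
      exact (hc.mul (hφ.pow a)).mul (((contDiff_infty_iff_deriv.mp hφ).2).pow b)
  | add _ _ ihf ihg => exact ihf.add ihg

lemma Idl.vanish {φ : ℝ → ℝ} {y₀ : ℝ} (h0 : φ y₀ = 0) (h1 : deriv φ y₀ = 0) :
    ∀ {n : ℕ} {f : ℝ → ℝ}, Idl φ n f → 1 ≤ n → f y₀ = 0 := by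
  intro n f h
  induction h with
  | gen c hc a b m hm =>
      intro hmn
      rcases Nat.lt_or_ge a 1 with ha | ha
      · have hb : b ≠ 0 := by omega
        simp [h1, zero_pow hb]
      · simp [h0, zero_pow (by omega : a ≠ 0)]
  | add _ _ ihf ihg =>
      intro hmn
      simp [ihf hmn, ihg hmn]

lemma Idl.derivMem {φ : ℝ → ℝ} (hφ : ContDiff ℝ (⊤ : ℕ∞) φ) {n : ℕ} {f : ℝ → ℝ}
    (h : Idl φ n f) : Idl φ (n - 1) (deriv f) := by
  have hdφ : ContDiff ℝ (⊤ : ℕ∞) (deriv φ) := (contDiff_infty_iff_deriv.mp hφ).2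
  induction h with
  | gen c hc a b m hm =>
      have key : ∀ y, HasDerivAt (fun y => c y * φ y ^ a * (deriv φ y) ^ b)
          ((deriv c y * φ y ^ a + c y * (↑a * φ y ^ (a - 1) * deriv φ y)) * (deriv φ y) ^ b
            + (c y * φ y ^ a) * (↑b * (deriv φ y) ^ (b - 1) * deriv (deriv φ) y)) y := by
        intro y
        have hc' : HasDerivAt c (deriv c y) y := ((hc.differentiable (by simp)) y).hasDerivAt
        have hφ' : HasDerivAt φ (deriv φ y) y := ((hφ.differentiable (by simp)) y).hasDerivAt
        have hd' : HasDerivAt (deriv φ) (deriv (deriv φ) y) y :=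
          ((hdφ.differentiable (by simp)) y).hasDerivAt
        exact (hc'.mul (hφ'.pow a)).mul (hd'.pow b)
      have h1 : Idl φ (m - 1) (fun y => deriv c y * φ y ^ a * (deriv φ y) ^ b) :=
        Idl.gen (deriv c) (contDiff_infty_iff_deriv.mp hc).2 a b _ (by omega)
      have h2 : Idl φ (m - 1) (fun y => ((a : ℝ) * c y) * φ y ^ (a - 1) * (deriv φ y) ^ (b + 1)) := by
        rcases a with _ | a'
        · exact (Idl.zero φ (m - 1)).congr' (by funext y; simp)
        · exact Idl.gen (fun y => ((a' + 1 : ℕ) : ℝ) * c y) (contDiff_const.mul hc)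
            a' (b + 1) _ (by omega)
      have h3 : Idl φ (m - 1)
          (fun y => ((b : ℝ) * c y * deriv (deriv φ) y) * φ y ^ a * (deriv φ y) ^ (b - 1)) := by
        rcases b with _ | b'
        · exact (Idl.zero φ (m - 1)).congr' (by funext y; simp)
        · exact Idl.gen (fun y => ((b' + 1 : ℕ) : ℝ) * c y * deriv (deriv φ) y)
            ((contDiff_const.mul hc).mul (contDiff_infty_iff_deriv.mp hdφ).2)
            a b' _ (by omega)
      refine ((h1.add h2).add h3).congr' ?_
      funext y
      rw [(key y).deriv]
      ring
  | add hf hg ihf ihg =>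
      refine (ihf.add ihg).congr' ?_
      funext y
      exact (deriv_fun_add ((hf.smooth hφ).differentiable (by simp) y)
        ((hg.smooth hφ).differentiable (by simp) y)).symm

/-- At a Type I singular point (`v = π`, `v_Y = 0`) all `Y`-derivatives of `u`
up to order 5 vanish. -/
theorem novikov_typeI_uY_derivatives_vanish
    (u v q : ℝ × ℝ → ℝ)
    (hu : ContDiff ℝ (⊤ : ℕ∞) u) (hv : ContDiff ℝ (⊤ : ℕ∞) v) (hq : ContDiff ℝ (⊤ : ℕ∞) q)
    (hrel : ∀ p : ℝ × ℝ,
      pY u p = (1 / 2) * q p * Real.sin (v p) * Real.cos (v p / 2) ^ 2)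
    (p₀ : ℝ × ℝ) (hsing : v p₀ = Real.pi) (hvY : pY v p₀ = 0) :
    ∀ k : ℕ, 1 ≤ k → k ≤ 5 → (pY^[k] u) p₀ = 0 := by
  have hv' : ContDiff ℝ (⊤ : ℕ∞) v := hv.of_le (by simp)
  have hq' : ContDiff ℝ (⊤ : ℕ∞) q := hq.of_le (by simp)
  set T₀ := p₀.1 with hT₀
  set y₀ := p₀.2 with hy₀
  set A : ℝ → ℝ := fun y => u (T₀, y) with hA
  set B : ℝ → ℝ := fun y => v (T₀, y) with hBdef
  set Q : ℝ → ℝ := fun y => q (T₀, y) with hQdef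
  have hcurve : ContDiff ℝ (⊤ : ℕ∞) (fun y : ℝ => ((T₀ : ℝ), y)) := contDiff_const.prodMk contDiff_id
  have hBs : ContDiff ℝ (⊤ : ℕ∞) B := hv'.comp hcurve
  have hQs : ContDiff ℝ (⊤ : ℕ∞) Q := hq'.comp hcurve
  set φ : ℝ → ℝ := fun y => Real.cos (B y / 2) with hφdef
  have hφs : ContDiff ℝ (⊤ : ℕ∞) φ := Real.contDiff_cos.comp (hBs.div_const 2)
  have hB0 : B y₀ = Real.pi := hsing
  have hB1 : deriv B y₀ = 0 := hvY
  have hφ0 : φ y₀ = 0 := by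
    simp [hφdef, hB0, Real.cos_pi_div_two]
  have hφ1 : deriv φ y₀ = 0 := by
    have hB' : HasDerivAt B (deriv B y₀) y₀ := ((hBs.differentiable (by simp)) y₀).hasDerivAt
    have h2 : HasDerivAt φ (-Real.sin (B y₀ / 2) * (deriv B y₀ / 2)) y₀ :=
      (hB'.div_const 2).cos
    rw [h2.deriv, hB1]
    ring
  -- the structural relation for the slice
  have hderivA : deriv A = fun y => (Q y * Real.sin (B y / 2)) * φ y ^ 3 * (deriv φ y) ^ 0 := by
    funext y
    have h : deriv A y = 1 / 2 * Q y * Real.sin (B y) * Real.cos (B y / 2) ^ 2 := hrel (T₀, y)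
    have hs : Real.sin (B y) = 2 * Real.sin (B y / 2) * Real.cos (B y / 2) := by
      rw [← Real.sin_two_mul]
      congr 1
      ring
    rw [h, hs]
    simp only [hφdef]
    ring
  have hgen : Idl φ 6 (deriv A) :=
    (Idl.gen (fun y => Q y * Real.sin (B y / 2))
      (hQs.mul (Real.contDiff_sin.comp (hBs.div_const 2))) 3 0 6 (by omega)).congr'
      hderivA.symm
  have hiter : ∀ j : ℕ, Idl φ (6 - j) (deriv^[j] (deriv A)) := by
    intro j
    induction j with
    | zero => simpa using hgen
    | succ j ih =>
        have h := ih.derivMem hφs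
        have e : 6 - j - 1 = 6 - (j + 1) := by omega
        rw [Function.iterate_succ_apply']
        exact e ▸ h
  have hslice : ∀ (k : ℕ) (y : ℝ), (pY^[k] u) (T₀, y) = deriv^[k] A y := by
    intro k
    induction k with
    | zero => intro y; rfl
    | succ k ih =>
        intro y
        rw [Function.iterate_succ_apply' pY, Function.iterate_succ_apply' deriv]
        show deriv (fun y' => (pY^[k] u) (T₀, y')) y = deriv (deriv^[k] A) y
        rw [show (fun y' => (pY^[k] u) (T₀, y')) = deriv^[k] A from funext ih]
  intro k hk1 hk5
  obtain ⟨j, rfl⟩ : ∃ j, k = j + 1 := ⟨k - 1, by omega⟩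
  have hp : (pY^[j + 1] u) p₀ = deriv^[j + 1] A y₀ := hslice (j + 1) y₀
  rw [hp, Function.iterate_succ_apply deriv j A]
  exact Idl.vanish hφ0 hφ1 (hiter j) (by omega)
end

section
/- Let u, v, q : ℝ × ℝ → ℝ be C^∞ functions of (T,Y) satisfying for all (T,Y) the relation ∂_Y u = (1/2)·q·sin v·cos²(v/2). If at a point (T₀,Y₀) one has v(T₀,Y₀) = π, ∂_Y v(T₀,Y₀) = 0, ∂_T v(T₀,Y₀) = 0 and ∂_T∂_Y v(T₀,Y₀) = 0, then the mixed partial derivatives ∂_T∂_Y^k u(T₀,Y₀) vanish for every k = 1, 2, 3, 4, 5. -/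
open Real

lemma hasDerivAt_sliceY {f : ℝ × ℝ → ℝ} (hf : ContDiff ℝ (⊤ : ℕ∞) f) (p : ℝ × ℝ) :
    HasDerivAt (fun y => f (p.1, y)) (pY f p) p.2 := by
  have hd : Differentiable ℝ f := hf.differentiable (by simp)
  have hdiff : DifferentiableAt ℝ (fun y => f (p.1, y)) p.2 :=
    (hd.comp ((differentiable_const _).prodMk differentiable_id)).differentiableAt
  exact hdiff.hasDerivAt

lemma hasDerivAt_sliceT {f : ℝ × ℝ → ℝ} (hf : ContDiff ℝ (⊤ : ℕ∞) f) (p : ℝ × ℝ) :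
    HasDerivAt (fun s => f (s, p.2)) (pT f p) p.1 := by
  have hd : Differentiable ℝ f := hf.differentiable (by simp)
  have hdiff : DifferentiableAt ℝ (fun s => f (s, p.2)) p.1 :=
    (hd.comp (differentiable_id.prodMk (differentiable_const _))).differentiableAt
  exact hdiff.hasDerivAt

lemma pY_mul {f g : ℝ × ℝ → ℝ} (hf : ContDiff ℝ (⊤ : ℕ∞) f) (hg : ContDiff ℝ (⊤ : ℕ∞) g) (p : ℝ × ℝ) :
    pY (fun x => f x * g x) p = pY f p * g p + f p * pY g p :=
  ((hasDerivAt_sliceY hf p).mul (hasDerivAt_sliceY hg p)).deriv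

lemma pT_mul {f g : ℝ × ℝ → ℝ} (hf : ContDiff ℝ (⊤ : ℕ∞) f) (hg : ContDiff ℝ (⊤ : ℕ∞) g) (p : ℝ × ℝ) :
    pT (fun x => f x * g x) p = pT f p * g p + f p * pT g p :=
  ((hasDerivAt_sliceT hf p).mul (hasDerivAt_sliceT hg p)).deriv

lemma pY_add {f g : ℝ × ℝ → ℝ} (hf : ContDiff ℝ (⊤ : ℕ∞) f) (hg : ContDiff ℝ (⊤ : ℕ∞) g) (p : ℝ × ℝ) :
    pY (fun x => f x + g x) p = pY f p + pY g p :=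
  ((hasDerivAt_sliceY hf p).add (hasDerivAt_sliceY hg p)).deriv

lemma pT_add {f g : ℝ × ℝ → ℝ} (hf : ContDiff ℝ (⊤ : ℕ∞) f) (hg : ContDiff ℝ (⊤ : ℕ∞) g) (p : ℝ × ℝ) :
    pT (fun x => f x + g x) p = pT f p + pT g p :=
  ((hasDerivAt_sliceT hf p).add (hasDerivAt_sliceT hg p)).deriv

lemma contDiff_pY {f : ℝ × ℝ → ℝ} (hf : ContDiff ℝ (⊤ : ℕ∞) f) : ContDiff ℝ (⊤ : ℕ∞) (pY f) := by
  have hd : Differentiable ℝ f := hf.differentiable (by simp)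
  have e : pY f = fun p => fderiv ℝ f p (0, 1) := by
    funext p
    have h1 : HasDerivAt (fun y : ℝ => ((p.1, y) : ℝ × ℝ)) ((0 : ℝ), (1 : ℝ)) p.2 :=
      (hasDerivAt_const _ _).prodMk (hasDerivAt_id _)
    have h2 := (hd p).hasFDerivAt.comp_hasDerivAt p.2 h1
    exact h2.deriv
  rw [e]
  exact (hf.fderiv_right (by simp)).clm_apply contDiff_const

lemma pY_mul4 {a b c d : ℝ × ℝ → ℝ} (ha : ContDiff ℝ (⊤ : ℕ∞) a) (hb : ContDiff ℝ (⊤ : ℕ∞) b)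
    (hc : ContDiff ℝ (⊤ : ℕ∞) c) (hd : ContDiff ℝ (⊤ : ℕ∞) d) (p : ℝ × ℝ) :
    pY (fun x => a x * b x * c x * d x) p
      = pY a p * b p * c p * d p + a p * pY b p * c p * d p
        + a p * b p * pY c p * d p + a p * b p * c p * pY d p := by
  have e1 : pY (fun x => a x * b x * c x * d x) p
      = pY (fun x => a x * b x * c x) p * d p + (a p * b p * c p) * pY d p :=
    pY_mul ((ha.mul hb).mul hc) hd p
  have e2 : pY (fun x => a x * b x * c x) p
      = pY (fun x => a x * b x) p * c p + (a p * b p) * pY c p :=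
    pY_mul (ha.mul hb) hc p
  have e3 : pY (fun x => a x * b x) p = pY a p * b p + a p * pY b p := pY_mul ha hb p
  rw [e1, e2, e3]; ring

lemma pT_mul4 {a b c d : ℝ × ℝ → ℝ} (ha : ContDiff ℝ (⊤ : ℕ∞) a) (hb : ContDiff ℝ (⊤ : ℕ∞) b)
    (hc : ContDiff ℝ (⊤ : ℕ∞) c) (hd : ContDiff ℝ (⊤ : ℕ∞) d) (p : ℝ × ℝ) :
    pT (fun x => a x * b x * c x * d x) p
      = pT a p * b p * c p * d p + a p * pT b p * c p * d p
        + a p * b p * pT c p * d p + a p * b p * c p * pT d p := by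
  have e1 : pT (fun x => a x * b x * c x * d x) p
      = pT (fun x => a x * b x * c x) p * d p + (a p * b p * c p) * pT d p :=
    pT_mul ((ha.mul hb).mul hc) hd p
  have e2 : pT (fun x => a x * b x * c x) p
      = pT (fun x => a x * b x) p * c p + (a p * b p) * pT c p :=
    pT_mul (ha.mul hb) hc p
  have e3 : pT (fun x => a x * b x) p = pT a p * b p + a p * pT b p := pT_mul ha hb p
  rw [e1, e2, e3]; ring

/-- Representable functions: sums of terms `a · (∂_Y^i w)(∂_Y^j w)(∂_Y^k w)`
with `a` smooth and `i + j + k ≤ n`. -/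
inductive NovTerm (w : ℝ × ℝ → ℝ) : ℕ → (ℝ × ℝ → ℝ) → Prop
  | term (n : ℕ) (a : ℝ × ℝ → ℝ) (i j k : ℕ) (ha : ContDiff ℝ (⊤ : ℕ∞) a) (hn : i + j + k ≤ n) :
      NovTerm w n (fun p => a p * pY^[i] w p * pY^[j] w p * pY^[k] w p)
  | add {n : ℕ} {f g : ℝ × ℝ → ℝ} (hf : NovTerm w n f) (hg : NovTerm w n g) :
      NovTerm w n (fun p => f p + g p)

lemma iter_smooth {w : ℝ × ℝ → ℝ} (hw : ContDiff ℝ (⊤ : ℕ∞) w) (i : ℕ) :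
    ContDiff ℝ (⊤ : ℕ∞) (pY^[i] w) := by
  induction i with
  | zero => simpa using hw
  | succ i ih => rw [Function.iterate_succ_apply']; exact contDiff_pY ih

lemma rep_smooth {w : ℝ × ℝ → ℝ} (hw : ContDiff ℝ (⊤ : ℕ∞) w) {n : ℕ} {f : ℝ × ℝ → ℝ}
    (h : NovTerm w n f) : ContDiff ℝ (⊤ : ℕ∞) f := by
  induction h with
  | term a i j k ha hn =>
      exact ((ha.mul (iter_smooth hw i)).mul (iter_smooth hw j)).mul (iter_smooth hw k)
  | add hf hg ihf ihg => exact ihf.add ihg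

lemma rep_pY {w : ℝ × ℝ → ℝ} (hw : ContDiff ℝ (⊤ : ℕ∞) w) {n : ℕ} {f : ℝ × ℝ → ℝ}
    (h : NovTerm w n f) : NovTerm w (n + 1) (pY f) := by
  induction h with
  | term a i j k ha hn =>
      have e : pY (fun p => a p * pY^[i] w p * pY^[j] w p * pY^[k] w p)
          = fun p => pY a p * pY^[i] w p * pY^[j] w p * pY^[k] w p
            + (a p * pY^[i+1] w p * pY^[j] w p * pY^[k] w p
            + (a p * pY^[i] w p * pY^[j+1] w p * pY^[k] w p
            + a p * pY^[i] w p * pY^[j] w p * pY^[k+1] w p)) := by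
        funext p
        rw [pY_mul4 ha (iter_smooth hw i) (iter_smooth hw j) (iter_smooth hw k)]
        simp only [Function.iterate_succ_apply']
        ring
      rw [e]
      exact NovTerm.add (NovTerm.term _ _ i j k (contDiff_pY ha) (by omega))
        (NovTerm.add (NovTerm.term _ _ (i+1) j k ha (by omega))
          (NovTerm.add (NovTerm.term _ _ i (j+1) k ha (by omega))
            (NovTerm.term _ _ i j (k+1) ha (by omega))))
  | @add f g hf hg ihf ihg =>
      have e : pY (fun p => f p + g p) = fun p => pY f p + pY g p := by
        funext p
        exact pY_add (rep_smooth hw hf) (rep_smooth hw hg) p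
      rw [e]
      exact NovTerm.add ihf ihg

lemma rep_pT_zero {w : ℝ × ℝ → ℝ} {p₀ : ℝ × ℝ} (hw : ContDiff ℝ (⊤ : ℕ∞) w)
    (h0 : w p₀ = 0) (hY : pY w p₀ = 0) (hT : pT w p₀ = 0)
    {n : ℕ} {f : ℝ × ℝ → ℝ} (h : NovTerm w n f) (hn : n ≤ 4) :
    pT f p₀ = 0 := by
  have hsmall : ∀ i ≤ 1, pY^[i] w p₀ = 0 := by
    intro i hi
    interval_cases i
    · simpa using h0
    · simpa using hY
  have hT0 : pT (pY^[0] w) p₀ = 0 := by simpa using hT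
  revert hn
  induction h with
  | term a i j k ha hk =>
      intro hn
      rw [pT_mul4 ha (iter_smooth hw i) (iter_smooth hw j) (iter_smooth hw k)]
      rcases (by omega :
          (i ≤ 1 ∧ j ≤ 1) ∨ (i ≤ 1 ∧ k ≤ 1) ∨ (j ≤ 1 ∧ k ≤ 1) ∨ i = 0 ∨ j = 0 ∨ k = 0)
        with hc | hc | hc | hc | hc | hc
      · rw [hsmall i hc.1, hsmall j hc.2]; ring
      · rw [hsmall i hc.1, hsmall k hc.2]; ring
      · rw [hsmall j hc.1, hsmall k hc.2]; ring
      · subst hc; rw [hsmall 0 (by omega), hT0]; ring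
      · subst hc; rw [hsmall 0 (by omega), hT0]; ring
      · subst hc; rw [hsmall 0 (by omega), hT0]; ring
  | add hf hg ihf ihg =>
      intro hn
      rw [pT_add (rep_smooth hw hf) (rep_smooth hw hg)]
      rw [ihf hn, ihg hn]; ring

/-- At a Type I singular point (`v = π`, `v_Y = 0`, and additionally `v_T = 0`,
`v_{TY} = 0`) all mixed derivatives `∂_T ∂_Y^k u`, `1 ≤ k ≤ 5`, vanish. -/
theorem novikov_typeI_mixed_derivatives_vanish
    (u v q : ℝ × ℝ → ℝ)
    (hu : ContDiff ℝ (⊤ : ℕ∞) u) (hv : ContDiff ℝ (⊤ : ℕ∞) v) (hq : ContDiff ℝ (⊤ : ℕ∞) q)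
    (hrel : ∀ p : ℝ × ℝ,
      pY u p = (1 / 2) * q p * Real.sin (v p) * Real.cos (v p / 2) ^ 2)
    (p₀ : ℝ × ℝ) (hsing : v p₀ = Real.pi) (hvY : pY v p₀ = 0)
    (hvT : pT v p₀ = 0) (hvTY : pT (pY v) p₀ = 0) :
    ∀ k : ℕ, 1 ≤ k → k ≤ 5 → pT (pY^[k] u) p₀ = 0 := by
  set W : ℝ × ℝ → ℝ := fun p => Real.cos (v p / 2) with hWdef
  set A : ℝ × ℝ → ℝ := fun p => q p * Real.sin (v p / 2) with hAdef
  have hWsmooth : ContDiff ℝ (⊤ : ℕ∞) W := Real.contDiff_cos.comp (hv.div_const 2)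
  have hAsmooth : ContDiff ℝ (⊤ : ℕ∞) A := hq.mul (Real.contDiff_sin.comp (hv.div_const 2))
  have hW0 : W p₀ = 0 := by
    simp [hWdef, hsing, Real.cos_pi_div_two]
  have hWY : pY W p₀ = 0 := by
    have h1 : HasDerivAt (fun y => v (p₀.1, y)) (pY v p₀) p₀.2 := hasDerivAt_sliceY hv p₀
    have h2 : HasDerivAt (fun y => Real.cos (v (p₀.1, y) / 2))
        (-Real.sin (v p₀ / 2) * (pY v p₀ / 2)) p₀.2 :=
      by have := (Real.hasDerivAt_cos (v p₀ / 2)).comp p₀.2 (h1.div_const 2); exact this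
    have h3 : pY W p₀ = -Real.sin (v p₀ / 2) * (pY v p₀ / 2) := h2.deriv
    rw [h3, hvY]; ring
  have hWT : pT W p₀ = 0 := by
    have h1 : HasDerivAt (fun s => v (s, p₀.2)) (pT v p₀) p₀.1 := hasDerivAt_sliceT hv p₀
    have h2 : HasDerivAt (fun s => Real.cos (v (s, p₀.2) / 2))
        (-Real.sin (v p₀ / 2) * (pT v p₀ / 2)) p₀.1 :=
      by have := (Real.hasDerivAt_cos (v p₀ / 2)).comp p₀.1 (h1.div_const 2); exact this
    have h3 : pT W p₀ = -Real.sin (v p₀ / 2) * (pT v p₀ / 2) := h2.deriv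
    rw [h3, hvT]; ring
  have key : pY u = fun p => A p * pY^[0] W p * pY^[0] W p * pY^[0] W p := by
    funext p
    simp only [Function.iterate_zero_apply, hWdef, hAdef]
    rw [hrel p]
    have hs : Real.sin (v p) = 2 * Real.sin (v p / 2) * Real.cos (v p / 2) := by
      rw [← Real.sin_two_mul]; congr 1; ring
    rw [hs]; ring
  have hrep : ∀ m : ℕ, NovTerm W m (pY^[m] (pY u)) := by
    intro m
    induction m with
    | zero =>
        rw [Function.iterate_zero_apply, key]
        exact NovTerm.term 0 A 0 0 0 hAsmooth (by omega)
    | succ m ih =>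
        rw [Function.iterate_succ_apply']
        exact rep_pY hWsmooth ih
  intro k hk1 hk5
  obtain ⟨m, rfl⟩ : ∃ m, k = m + 1 := ⟨k - 1, by omega⟩
  rw [Function.iterate_succ_apply]
  exact rep_pT_zero hWsmooth hW0 hWY hWT (hrep m) (by omega)
end

section
/- Let u, v, q : ℝ × ℝ → ℝ be C^∞ functions of (T,Y) satisfying for all (T,Y) the relation ∂_Y u = (1/2)·q·sin v·cos²(v/2). If at a point (T₀,Y₀) one has v(T₀,Y₀) = π, ∂_Y v(T₀,Y₀) ≠ 0, and ∂_Y²v(T₀,Y₀) = 0, then ∂_Y u(T₀,Y₀) = ∂_Y²u(T₀,Y₀) = ∂_Y³u(T₀,Y₀) = 0 and ∂_Y⁴u(T₀,Y₀) = −(3/4)·q(T₀,Y₀)·(∂_Y v(T₀,Y₀))³; in particular, if q(T₀,Y₀) ≠ 0 then ∂_Y⁴u(T₀,Y₀) ≠ 0. If moreover ∂_T v(T₀,Y₀) = 0, then also ∂_T∂_Y u(T₀,Y₀) = ∂_T∂_Y²u(T₀,Y₀) = ∂_T∂_Y³u(T₀,Y₀) = 0. -/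
open Real

noncomputable def F0 (x : ℝ) : ℝ := Real.sin x / 4 + Real.sin (2 * x) / 8
noncomputable def F1 (x : ℝ) : ℝ := Real.cos x / 4 + Real.cos (2 * x) / 4
noncomputable def F2 (x : ℝ) : ℝ := -Real.sin x / 4 - Real.sin (2 * x) / 2
noncomputable def F3 (x : ℝ) : ℝ := -Real.cos x / 4 - Real.cos (2 * x)

lemma hasDerivAt_two_mul (x : ℝ) : HasDerivAt (fun x : ℝ => 2 * x) 2 x := by
  simpa using (hasDerivAt_id x).const_mul 2

lemma F0_deriv (x : ℝ) : HasDerivAt F0 (F1 x) x := by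
  have h := ((Real.hasDerivAt_sin x).div_const 4).add
    (((Real.hasDerivAt_sin (2 * x)).comp x (hasDerivAt_two_mul x)).div_const 8)
  have e : F1 x = Real.cos x / 4 + Real.cos (2 * x) * 2 / 8 := by rw [F1]; ring
  rw [e]; exact h

lemma F1_deriv (x : ℝ) : HasDerivAt F1 (F2 x) x := by
  have h := ((Real.hasDerivAt_cos x).div_const 4).add
    (((Real.hasDerivAt_cos (2 * x)).comp x (hasDerivAt_two_mul x)).div_const 4)
  have e : F2 x = -Real.sin x / 4 + -Real.sin (2 * x) * 2 / 4 := by rw [F2]; ring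
  rw [e]; exact h

lemma F2_deriv (x : ℝ) : HasDerivAt F2 (F3 x) x := by
  have h := (((Real.hasDerivAt_sin x).div_const 4).neg).sub
    (((Real.hasDerivAt_sin (2 * x)).comp x (hasDerivAt_two_mul x)).div_const 2)
  have e : F3 x = -(Real.cos x / 4) - Real.cos (2 * x) * 2 / 2 := by rw [F3]; ring
  have e2 : F2 = fun x => -(Real.sin x / 4) - Real.sin (2 * x) / 2 := by
    funext y; rw [F2]; ring
  rw [e, e2]; exact h

lemma F0_pi : F0 π = 0 := by simp [F0]
lemma F1_pi : F1 π = 0 := by simp [F1, Real.cos_two_pi]; ring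
lemma F2_pi : F2 π = 0 := by simp [F2]
lemma F3_pi : F3 π = -3 / 4 := by simp [F3, Real.cos_two_pi]; ring

lemma pY_eq_fderiv (f : ℝ × ℝ → ℝ) (hf : ContDiff ℝ (⊤ : ℕ∞) f) (p : ℝ × ℝ) :
    pY f p = fderiv ℝ f p ((0 : ℝ), (1 : ℝ)) := by
  have hd : HasFDerivAt f (fderiv ℝ f p) p := (hf.differentiable (by simp) p).hasFDerivAt
  have hline : HasDerivAt (fun y : ℝ => ((p.1 : ℝ), y)) ((0 : ℝ), (1 : ℝ)) p.2 :=
    (hasDerivAt_const _ _).prodMk (hasDerivAt_id _)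
  exact (hd.comp_hasDerivAt p.2 hline).deriv

lemma pY_smooth (f : ℝ × ℝ → ℝ) (hf : ContDiff ℝ (⊤ : ℕ∞) f) : ContDiff ℝ (⊤ : ℕ∞) (pY f) := by
  have h : pY f = fun p => fderiv ℝ f p ((0 : ℝ), (1 : ℝ)) := funext (pY_eq_fderiv f hf)
  rw [h]
  exact (hf.fderiv_right (by simp)).clm_apply contDiff_const

lemma hasDerivAt_pY (f : ℝ × ℝ → ℝ) (hf : ContDiff ℝ (⊤ : ℕ∞) f) (T y : ℝ) :
    HasDerivAt (fun y' => f (T, y')) (pY f (T, y)) y := by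
  have hd : DifferentiableAt ℝ (fun y' => f (T, y')) y :=
    ((hf.differentiable (by simp)).comp ((differentiable_const T).prodMk differentiable_id)) y
  exact hd.hasDerivAt

lemma hasDerivAt_pT (f : ℝ × ℝ → ℝ) (hf : ContDiff ℝ (⊤ : ℕ∞) f) (T y : ℝ) :
    HasDerivAt (fun s => f (s, y)) (pT f (T, y)) T := by
  have hd : DifferentiableAt ℝ (fun s => f (s, y)) T :=
    ((hf.differentiable (by simp)).comp (differentiable_id.prodMk (differentiable_const y))) T
  exact hd.hasDerivAt

/-- At a Type II singular point (`v = π`, `v_Y ≠ 0`, `v_{YY} = 0`), the first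
three `Y`-derivatives of `u` vanish, the fourth equals `−(3/4) q v_Y³`
(hence is nonzero if `q ≠ 0`), and if moreover `v_T = 0` then the mixed
derivatives `∂_T ∂_Y^k u`, `k = 1, 2, 3`, vanish. -/
theorem novikov_typeII_u_derivatives
    (u v q : ℝ × ℝ → ℝ)
    (hu : ContDiff ℝ (⊤ : ℕ∞) u) (hv : ContDiff ℝ (⊤ : ℕ∞) v) (hq : ContDiff ℝ (⊤ : ℕ∞) q)
    (hrel : ∀ p : ℝ × ℝ,
      pY u p = (1 / 2) * q p * Real.sin (v p) * Real.cos (v p / 2) ^ 2)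
    (p₀ : ℝ × ℝ) (hsing : v p₀ = Real.pi) (hvY : pY v p₀ ≠ 0)
    (hvYY : pY (pY v) p₀ = 0) :
    pY u p₀ = 0 ∧ (pY^[2] u) p₀ = 0 ∧ (pY^[3] u) p₀ = 0 ∧
      (pY^[4] u) p₀ = -(3 / 4) * q p₀ * (pY v p₀) ^ 3 ∧
      (q p₀ ≠ 0 → (pY^[4] u) p₀ ≠ 0) ∧
      (pT v p₀ = 0 →
        pT (pY u) p₀ = 0 ∧ pT (pY^[2] u) p₀ = 0 ∧ pT (pY^[3] u) p₀ = 0) := by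
  have hq1 := pY_smooth q hq
  have hq2 := pY_smooth _ hq1
  have hv1 := pY_smooth v hv
  have hv2 := pY_smooth _ hv1
  -- Step 1: pY u = q * F0 ∘ v
  have E1 : ∀ p : ℝ × ℝ, pY u p = q p * F0 (v p) := by
    intro p
    have h1 : Real.cos (v p / 2) ^ 2 = 1 / 2 + Real.cos (v p) / 2 := by
      have h := Real.cos_sq (v p / 2)
      have e : (2 : ℝ) * (v p / 2) = v p := by ring
      rwa [e] at h
    rw [hrel p, h1, F0, Real.sin_two_mul]; ring
  -- Step 2
  have E2 : ∀ p : ℝ × ℝ, pY (pY u) p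
      = pY q p * F0 (v p) + q p * (F1 (v p) * pY v p) := by
    intro p
    have hfun : (fun y => pY u (p.1, y)) = fun y => q (p.1, y) * F0 (v (p.1, y)) :=
      funext fun y => E1 (p.1, y)
    have h := (hasDerivAt_pY q hq p.1 p.2).mul
      ((F0_deriv (v (p.1, p.2))).comp p.2 (hasDerivAt_pY v hv p.1 p.2))
    show deriv (fun y => pY u (p.1, y)) p.2 = _
    rw [hfun]
    exact h.deriv
  -- Step 3
  have E3 : ∀ p : ℝ × ℝ, pY (pY (pY u)) p
      = (pY (pY q) p * F0 (v p) + pY q p * (F1 (v p) * pY v p))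
        + (pY q p * (F1 (v p) * pY v p)
          + q p * ((F2 (v p) * pY v p) * pY v p + F1 (v p) * pY (pY v) p)) := by
    intro p
    have hfun : (fun y => pY (pY u) (p.1, y))
        = fun y => pY q (p.1, y) * F0 (v (p.1, y))
            + q (p.1, y) * (F1 (v (p.1, y)) * pY v (p.1, y)) :=
      funext fun y => E2 (p.1, y)
    have hV := hasDerivAt_pY v hv p.1 p.2
    have h := ((hasDerivAt_pY (pY q) hq1 p.1 p.2).mul
        ((F0_deriv (v (p.1, p.2))).comp p.2 hV)).add
      ((hasDerivAt_pY q hq p.1 p.2).mul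
        (((F1_deriv (v (p.1, p.2))).comp p.2 hV).mul
          (hasDerivAt_pY (pY v) hv1 p.1 p.2)))
    show deriv (fun y => pY (pY u) (p.1, y)) p.2 = _
    rw [hfun]
    exact h.deriv
  -- Step 4 : fourth derivative at p₀
  have E4 : pY (pY (pY (pY u))) p₀ = -(3 / 4) * q p₀ * (pY v p₀) ^ 3 := by
    have hfun : (fun y => pY (pY (pY u)) (p₀.1, y))
        = fun y => (pY (pY q) (p₀.1, y) * F0 (v (p₀.1, y))
              + pY q (p₀.1, y) * (F1 (v (p₀.1, y)) * pY v (p₀.1, y)))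
            + (pY q (p₀.1, y) * (F1 (v (p₀.1, y)) * pY v (p₀.1, y))
              + q (p₀.1, y) * ((F2 (v (p₀.1, y)) * pY v (p₀.1, y)) * pY v (p₀.1, y)
                + F1 (v (p₀.1, y)) * pY (pY v) (p₀.1, y))) :=
      funext fun y => E3 (p₀.1, y)
    have hV := hasDerivAt_pY v hv p₀.1 p₀.2
    have hW := hasDerivAt_pY (pY v) hv1 p₀.1 p₀.2
    have hZ := hasDerivAt_pY (pY (pY v)) hv2 p₀.1 p₀.2
    have hQ := hasDerivAt_pY q hq p₀.1 p₀.2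
    have hA := hasDerivAt_pY (pY q) hq1 p₀.1 p₀.2
    have hB := hasDerivAt_pY (pY (pY q)) hq2 p₀.1 p₀.2
    have hF0 := (F0_deriv (v (p₀.1, p₀.2))).comp p₀.2 hV
    have hF1 := (F1_deriv (v (p₀.1, p₀.2))).comp p₀.2 hV
    have hF2 := (F2_deriv (v (p₀.1, p₀.2))).comp p₀.2 hV
    have h := ((hB.mul hF0).add (hA.mul (hF1.mul hW))).add
      ((hA.mul (hF1.mul hW)).add
        (hQ.mul (((hF2.mul hW).mul hW).add (hF1.mul hZ))))
    show deriv (fun y => pY (pY (pY u)) (p₀.1, y)) p₀.2 = _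
    simp only [Function.comp_apply, Pi.mul_def, Pi.add_def] at h
    rw [hfun, h.deriv]
    simp only [Prod.mk.eta, hsing, F0_pi, F1_pi, F2_pi, F3_pi, hvYY]
    ring
  -- Mixed derivatives
  have M1 : pT (pY u) p₀ = 0 := by
    have hfun : (fun s => pY u (s, p₀.2)) = fun s => q (s, p₀.2) * F0 (v (s, p₀.2)) :=
      funext fun s => E1 (s, p₀.2)
    have h := (hasDerivAt_pT q hq p₀.1 p₀.2).mul
      ((F0_deriv (v (p₀.1, p₀.2))).comp p₀.1 (hasDerivAt_pT v hv p₀.1 p₀.2))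
    show deriv (fun s => pY u (s, p₀.2)) p₀.1 = 0
    simp only [Function.comp_apply, Pi.mul_def, Pi.add_def] at h
    rw [hfun, h.deriv]
    simp only [Prod.mk.eta, hsing, F0_pi, F1_pi]
    ring
  have M2 : pT (pY (pY u)) p₀ = 0 := by
    have hfun : (fun s => pY (pY u) (s, p₀.2))
        = fun s => pY q (s, p₀.2) * F0 (v (s, p₀.2))
            + q (s, p₀.2) * (F1 (v (s, p₀.2)) * pY v (s, p₀.2)) :=
      funext fun s => E2 (s, p₀.2)
    have hV := hasDerivAt_pT v hv p₀.1 p₀.2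
    have h := ((hasDerivAt_pT (pY q) hq1 p₀.1 p₀.2).mul
        ((F0_deriv (v (p₀.1, p₀.2))).comp p₀.1 hV)).add
      ((hasDerivAt_pT q hq p₀.1 p₀.2).mul
        (((F1_deriv (v (p₀.1, p₀.2))).comp p₀.1 hV).mul
          (hasDerivAt_pT (pY v) hv1 p₀.1 p₀.2)))
    show deriv (fun s => pY (pY u) (s, p₀.2)) p₀.1 = 0
    simp only [Function.comp_apply, Pi.mul_def, Pi.add_def] at h
    rw [hfun, h.deriv]
    simp only [Prod.mk.eta, hsing, F0_pi, F1_pi, F2_pi]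
    ring
  have M3 : pT v p₀ = 0 → pT (pY (pY (pY u))) p₀ = 0 := by
    intro hvT
    have hfun : (fun s => pY (pY (pY u)) (s, p₀.2))
        = fun s => (pY (pY q) (s, p₀.2) * F0 (v (s, p₀.2))
              + pY q (s, p₀.2) * (F1 (v (s, p₀.2)) * pY v (s, p₀.2)))
            + (pY q (s, p₀.2) * (F1 (v (s, p₀.2)) * pY v (s, p₀.2))
              + q (s, p₀.2) * ((F2 (v (s, p₀.2)) * pY v (s, p₀.2)) * pY v (s, p₀.2)
                + F1 (v (s, p₀.2)) * pY (pY v) (s, p₀.2))) :=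
      funext fun s => E3 (s, p₀.2)
    have hV := hasDerivAt_pT v hv p₀.1 p₀.2
    have hW := hasDerivAt_pT (pY v) hv1 p₀.1 p₀.2
    have hZ := hasDerivAt_pT (pY (pY v)) hv2 p₀.1 p₀.2
    have hQ := hasDerivAt_pT q hq p₀.1 p₀.2
    have hA := hasDerivAt_pT (pY q) hq1 p₀.1 p₀.2
    have hB := hasDerivAt_pT (pY (pY q)) hq2 p₀.1 p₀.2
    have hF0 := (F0_deriv (v (p₀.1, p₀.2))).comp p₀.1 hV
    have hF1 := (F1_deriv (v (p₀.1, p₀.2))).comp p₀.1 hV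
    have hF2 := (F2_deriv (v (p₀.1, p₀.2))).comp p₀.1 hV
    have h := ((hB.mul hF0).add (hA.mul (hF1.mul hW))).add
      ((hA.mul (hF1.mul hW)).add
        (hQ.mul (((hF2.mul hW).mul hW).add (hF1.mul hZ))))
    show deriv (fun s => pY (pY (pY u)) (s, p₀.2)) p₀.1 = 0
    simp only [Function.comp_apply, Pi.mul_def, Pi.add_def] at h
    rw [hfun, h.deriv]
    simp only [Prod.mk.eta, hsing, hvT, F0_pi, F1_pi, F2_pi, F3_pi]
    ring
  have h1 : pY u p₀ = 0 := by rw [E1 p₀, hsing, F0_pi]; ring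
  have h2 : pY (pY u) p₀ = 0 := by rw [E2 p₀, hsing, F0_pi, F1_pi]; ring
  have h3 : pY (pY (pY u)) p₀ = 0 := by rw [E3 p₀, hsing, F0_pi, F1_pi, F2_pi]; ring
  refine ⟨h1, h2, h3, E4, ?_, fun hvT => ⟨M1, M2, M3 hvT⟩⟩
  intro hq0
  show pY (pY (pY (pY u))) p₀ ≠ 0
  rw [E4]
  exact mul_ne_zero (mul_ne_zero (by norm_num) hq0) (pow_ne_zero 3 hvY)
end

section
/- Let X, U : ℝ → ℝ, and let Y₀, x₀, u₀, A, B be real numbers with A > 0. Suppose that, as Y → Y₀ from the right, X(Y) = x₀ + A·(Y−Y₀)^8 + O((Y−Y₀)^9) and U(Y) = u₀ + B·(Y−Y₀)^6 + O((Y−Y₀)^7). Then X(Y) − x₀ > 0 for all Y > Y₀ sufficiently close to Y₀, and as Y → Y₀ from the right, U(Y) = u₀ + B·A^{−3/4}·(X(Y)−x₀)^{3/4} + O((X(Y)−x₀)^{7/8}). -/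
open Real Filter Topology Asymptotics

/-!
Write `s = Y − Y₀`, `a = X − x₀` and `b = A s⁸`. Since `a − b = O(s⁹) = o(b)`, eventually
`b ≤ 2a`, so `a > 0` and `s⁸ = O(a)`, whence `s⁷ = O(a^{7/8})`. On the other hand
`B A^{−3/4} b^{3/4} = B s⁶`, and since `t^{3/4}` lies between `1` and `t`,
`|a^{3/4} − b^{3/4}| ≤ |a − b| b^{−1/4} = O(s⁹ · s⁻²) = O(s⁷)`.
-/

lemma Real.abs_rpow_sub_one_le {p t : ℝ} (hp₀ : 0 ≤ p) (hp₁ : p ≤ 1) (ht : 0 ≤ t) :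
    |t ^ p - 1| ≤ |t - 1| := by
  refine Set.abs_sub_left_of_mem_uIcc ?_
  rcases le_total 1 t with h | h
  · exact Set.mem_uIcc.mpr <| .inl ⟨one_le_rpow h hp₀, rpow_le_self_of_one_le h hp₁⟩
  · exact Set.mem_uIcc.mpr <| .inr ⟨self_le_rpow_of_le_one ht h hp₁, rpow_le_one ht h hp₀⟩

lemma Real.abs_rpow_sub_rpow_le {p a b : ℝ} (hp₀ : 0 ≤ p) (hp₁ : p ≤ 1) (ha : 0 ≤ a)
    (hb : 0 < b) : |a ^ p - b ^ p| ≤ |a - b| * b ^ (p - 1) := by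
  have hbp : 0 < b ^ p := rpow_pos_of_pos hb p
  calc |a ^ p - b ^ p| = |b ^ p * ((a / b) ^ p - 1)| := by
        rw [div_rpow ha hb.le, mul_sub, mul_one, mul_div_cancel₀ _ hbp.ne']
    _ = b ^ p * |(a / b) ^ p - 1| := by rw [abs_mul, abs_of_pos hbp]
    _ ≤ b ^ p * |a / b - 1| :=
        mul_le_mul_of_nonneg_left (abs_rpow_sub_one_le hp₀ hp₁ (div_nonneg ha hb.le)) hbp.le
    _ = |a - b| * b ^ (p - 1) := by
        rw [rpow_sub_one hb.ne', div_sub_one hb.ne', abs_div, abs_of_pos hb]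
        ring

lemma Real.pow_rpow_eq_pow {s q : ℝ} {m n : ℕ} (hs : 0 ≤ s) (h : m * q = n) :
    (s ^ m) ^ q = s ^ n := by
  rw [← rpow_natCast s m, ← rpow_mul hs, h, rpow_natCast]

lemma Real.mul_pow_rpow_eq {A s q : ℝ} {m n : ℕ} (hA : 0 ≤ A) (hs : 0 ≤ s) (h : m * q = n) :
    (A * s ^ m) ^ q = A ^ q * s ^ n := by
  rw [mul_rpow hA (by positivity), pow_rpow_eq_pow hs h]

lemma isLittleO_leading_of_isBigO_pow {l : Filter ℝ} {f : ℝ → ℝ} {Y₀ A : ℝ} {m n : ℕ}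
    (hl : l ≤ 𝓝 Y₀) (hA : A ≠ 0) (hmn : m < n)
    (hf : (fun Y => f Y - A * (Y - Y₀) ^ m) =O[l] fun Y => (Y - Y₀) ^ n) :
    (fun Y => f Y - A * (Y - Y₀) ^ m) =o[l] fun Y => A * (Y - Y₀) ^ m :=
  hf.trans_isLittleO <| ((isLittleO_pow_pow hmn).comp_tendsto
    (tendsto_sub_nhds_zero_iff.mpr (tendsto_id.mono_left hl))).const_mul_right hA

namespace Asymptotics

variable {α : Type*} {l : Filter α} {f g k : α → ℝ}

lemma IsLittleO.eventually_le_two_mul (h : (fun x => f x - g x) =o[l] g)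
    (hg : ∀ᶠ x in l, 0 < g x) : ∀ᶠ x in l, g x ≤ 2 * f x := by
  filter_upwards [h.bound (by norm_num : (0 : ℝ) < 1 / 2), hg] with x hx hgx
  rw [norm_eq_abs, norm_eq_abs, abs_of_pos hgx] at hx
  linarith [neg_abs_le (f x - g x)]

lemma IsLittleO.isBigO_of_sub (h : (fun x => f x - g x) =o[l] g)
    (hg : ∀ᶠ x in l, 0 < g x) : g =O[l] f := by
  refine IsBigO.of_bound 2 ?_
  filter_upwards [h.eventually_le_two_mul hg, hg] with x hx hgx
  rw [norm_eq_abs, norm_eq_abs, abs_of_pos hgx, abs_of_pos (by linarith)]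
  exact hx

lemma IsBigO.rpow_sub_rpow {p : ℝ} (hp₀ : 0 ≤ p) (hp₁ : p ≤ 1) (hf : ∀ᶠ x in l, 0 ≤ f x)
    (hg : ∀ᶠ x in l, 0 < g x) (h : (fun x => f x - g x) =O[l] k) :
    (fun x => f x ^ p - g x ^ p) =O[l] fun x => k x * g x ^ (p - 1) := by
  refine (IsBigO.of_bound 1 ?_).trans (h.mul (isBigO_refl (fun x => g x ^ (p - 1)) l))
  filter_upwards [hf, hg] with x hfx hgx
  rw [one_mul, norm_eq_abs, norm_eq_abs, abs_mul, abs_of_pos (rpow_pos_of_pos hgx _)]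
  exact abs_rpow_sub_rpow_le hp₀ hp₁ hfx hgx

end Asymptotics

/-- Inversion step for the Type I singularity profile of the Novikov equation:
from `X(Y) = x₀ + A(Y−Y₀)⁸ + O((Y−Y₀)⁹)` and `U(Y) = u₀ + B(Y−Y₀)⁶ + O((Y−Y₀)⁷)`
as `Y → Y₀⁺` with `A > 0`, one gets `X(Y) − x₀ > 0` near `Y₀⁺` and
`U(Y) = u₀ + B·A^{−3/4}·(X(Y)−x₀)^{3/4} + O((X(Y)−x₀)^{7/8})`. -/
theorem novikov_typeI_profile_inversion
    (X U : ℝ → ℝ) (Y₀ x₀ u₀ A B : ℝ) (hA : 0 < A)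
    (hX : (fun Y => X Y - x₀ - A * (Y - Y₀) ^ 8) =O[𝓝[>] Y₀]
            (fun Y => (Y - Y₀) ^ 9))
    (hU : (fun Y => U Y - u₀ - B * (Y - Y₀) ^ 6) =O[𝓝[>] Y₀]
            (fun Y => (Y - Y₀) ^ 7)) :
    (∀ᶠ Y in 𝓝[>] Y₀, 0 < X Y - x₀) ∧
      (fun Y => U Y - u₀ - B * A ^ (-(3 : ℝ) / 4) * (X Y - x₀) ^ ((3 : ℝ) / 4))
        =O[𝓝[>] Y₀] (fun Y => (X Y - x₀) ^ ((7 : ℝ) / 8)) := by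
  have hs : ∀ᶠ Y in 𝓝[>] Y₀, 0 < Y - Y₀ :=
    eventually_nhdsWithin_of_forall fun Y hY => sub_pos.mpr hY
  have hb : ∀ᶠ Y in 𝓝[>] Y₀, 0 < A * (Y - Y₀) ^ 8 := hs.mono fun Y hY => by positivity
  have hb34 : ∀ᶠ Y in 𝓝[>] Y₀,
      (A * (Y - Y₀) ^ 8) ^ ((3 : ℝ) / 4) = A ^ ((3 : ℝ) / 4) * (Y - Y₀) ^ 6 :=
    hs.mono fun Y hY => mul_pow_rpow_eq hA.le hY.le (by norm_num)
  have hXo := isLittleO_leading_of_isBigO_pow (f := fun Y => X Y - x₀)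
    nhdsWithin_le_nhds hA.ne' (by norm_num) hX
  have hpos : ∀ᶠ Y in 𝓝[>] Y₀, 0 < X Y - x₀ :=
    ((hXo.eventually_le_two_mul hb).and hb).mono fun Y h => by linarith
  refine ⟨hpos, ?_⟩
  have hs7 : (fun Y => (Y - Y₀) ^ 7) =O[𝓝[>] Y₀] fun Y => (X Y - x₀) ^ ((7 : ℝ) / 8) := by
    have hs8 := (isBigO_self_const_mul hA.ne' _ _).trans (hXo.isBigO_of_sub hb)
    refine (hs8.rpow (by norm_num) (hpos.mono fun _ h => h.le)).congr' ?_ EventuallyEq.rfl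
    exact hs.mono fun Y hY => pow_rpow_eq_pow (n := 7) hY.le (by norm_num)
  have hdiff : (fun Y => (X Y - x₀) ^ ((3 : ℝ) / 4) - (A * (Y - Y₀) ^ 8) ^ ((3 : ℝ) / 4))
      =O[𝓝[>] Y₀] fun Y => (Y - Y₀) ^ 7 := by
    have hX34 := hX.rpow_sub_rpow (p := 3 / 4) (by norm_num) (by norm_num)
      (hpos.mono fun _ h => h.le) hb
    refine hX34.trans
      (((isBigO_refl _ _).const_mul_left (A ^ ((3 : ℝ) / 4) / A)).congr' ?_ EventuallyEq.rfl)
    filter_upwards [hb, hb34] with Y hbY hbY'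
    rw [rpow_sub_one hbY.ne', hbY']
    field_simp
  refine ((hU.sub (hdiff.const_mul_left (B * A ^ (-(3 : ℝ) / 4)))).congr' ?_
    EventuallyEq.rfl).trans hs7
  filter_upwards [hb34] with Y hY
  rw [hY, neg_div, rpow_neg hA.le]
  field_simp
  ring
end

section
/- Let X, U : ℝ → ℝ, and let Y₀, x₀, u₀, A, B be real numbers with A > 0. Suppose that, as Y → Y₀ from the right, X(Y) = x₀ + A·(Y−Y₀)^5 + O((Y−Y₀)^6) and U(Y) = u₀ + B·(Y−Y₀)^4 + O((Y−Y₀)^5). Then X(Y) − x₀ > 0 for all Y > Y₀ sufficiently close to Y₀, and as Y → Y₀ from the right, U(Y) = u₀ + B·A^{−4/5}·(X(Y)−x₀)^{4/5} + O(X(Y)−x₀). -/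
open Real Filter Topology Asymptotics

lemma rpow_45_sub_one_abs {r : ℝ} (hr : 0 < r) :
    |r ^ ((4:ℝ)/5) - 1| ≤ |r - 1| := by
  rcases le_total r 1 with h | h
  · have h1 : r ^ ((4:ℝ)/5) ≤ 1 := Real.rpow_le_one hr.le h (by norm_num)
    have h2 : r ≤ r ^ ((4:ℝ)/5) := by
      have := Real.rpow_le_rpow_of_exponent_ge hr h (by norm_num : (4:ℝ)/5 ≤ 1)
      simpa using this
    rw [abs_of_nonpos (by linarith), abs_of_nonpos (by linarith)]
    linarith
  · have h1 : 1 ≤ r ^ ((4:ℝ)/5) := Real.one_le_rpow h (by norm_num)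
    have h2 : r ^ ((4:ℝ)/5) ≤ r := by
      have := Real.rpow_le_rpow_of_exponent_le h (by norm_num : (4:ℝ)/5 ≤ 1)
      simpa using this
    rw [abs_of_nonneg (by linarith), abs_of_nonneg (by linarith)]
    linarith

/-- Inversion step for the Type II singularity profile of the Novikov equation:
from `X(Y) = x₀ + A(Y−Y₀)⁵ + O((Y−Y₀)⁶)` and `U(Y) = u₀ + B(Y−Y₀)⁴ + O((Y−Y₀)⁵)`
as `Y → Y₀⁺` with `A > 0`, one gets `X(Y) − x₀ > 0` near `Y₀⁺` and
`U(Y) = u₀ + B·A^{−4/5}·(X(Y)−x₀)^{4/5} + O(X(Y)−x₀)`. -/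
theorem novikov_typeII_profile_inversion
    (X U : ℝ → ℝ) (Y₀ x₀ u₀ A B : ℝ) (hA : 0 < A)
    (hX : (fun Y => X Y - x₀ - A * (Y - Y₀) ^ 5) =O[𝓝[>] Y₀]
            (fun Y => (Y - Y₀) ^ 6))
    (hU : (fun Y => U Y - u₀ - B * (Y - Y₀) ^ 4) =O[𝓝[>] Y₀]
            (fun Y => (Y - Y₀) ^ 5)) :
    (∀ᶠ Y in 𝓝[>] Y₀, 0 < X Y - x₀) ∧
      (fun Y => U Y - u₀ - B * A ^ (-(4 : ℝ) / 5) * (X Y - x₀) ^ ((4 : ℝ) / 5))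
        =O[𝓝[>] Y₀] (fun Y => X Y - x₀) := by
  obtain ⟨C₁, hC₁pos, h₁⟩ := hX.exists_pos
  obtain ⟨C₂, hC₂pos, h₂⟩ := hU.exists_pos
  rw [Asymptotics.isBigOWith_iff] at h₁ h₂
  have hten : Tendsto (fun Y => C₁ * (Y - Y₀)) (𝓝[>] Y₀) (𝓝 0) := by
    apply tendsto_nhdsWithin_of_tendsto_nhds
    have : Tendsto (fun Y : ℝ => C₁ * (Y - Y₀)) (𝓝 Y₀) (𝓝 (C₁ * (Y₀ - Y₀))) :=
      (tendsto_id.sub tendsto_const_nhds).const_mul C₁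
    simpa using this
  have hsmall : ∀ᶠ Y in 𝓝[>] Y₀, C₁ * (Y - Y₀) ≤ A / 2 :=
    (hten.eventually_le_const (by linarith)).mono fun x hx => hx
  have key : ∀ᶠ Y in 𝓝[>] Y₀,
      0 < Y - Y₀ ∧ A / 2 * (Y - Y₀) ^ 5 ≤ X Y - x₀ ∧
        |X Y - x₀ - A * (Y - Y₀) ^ 5| ≤ C₁ * (Y - Y₀) ^ 6 ∧
        C₁ * (Y - Y₀) ≤ A / 2 := by
    filter_upwards [h₁, hsmall, eventually_mem_nhdsWithin] with Y hb hsm hY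
    have hs : 0 < Y - Y₀ := sub_pos.mpr hY
    have hb' : |X Y - x₀ - A * (Y - Y₀) ^ 5| ≤ C₁ * (Y - Y₀) ^ 6 := by
      have := hb
      rw [Real.norm_eq_abs, Real.norm_eq_abs] at this
      calc |X Y - x₀ - A * (Y - Y₀) ^ 5| ≤ C₁ * |(Y - Y₀) ^ 6| := this
        _ = C₁ * (Y - Y₀) ^ 6 := by rw [abs_of_pos (by positivity)]
    refine ⟨hs, ?_, hb', hsm⟩
    have h5 : (0:ℝ) < (Y - Y₀) ^ 5 := by positivity
    have := (abs_le.mp hb').1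
    nlinarith [mul_le_mul_of_nonneg_right hsm h5.le]
  constructor
  · filter_upwards [key] with Y ⟨hs, hl, _, _⟩
    have : (0:ℝ) < A / 2 * (Y - Y₀) ^ 5 := by positivity
    linarith
  · rw [Asymptotics.isBigO_iff]
    refine ⟨(C₂ + |B| * C₁ / A) * (2 / A), ?_⟩
    filter_upwards [h₂, key] with Y hb2 ⟨hs, hl, hb1, hsm⟩
    set s := Y - Y₀ with hsdef
    have hAs : 0 < A * s ^ 5 := by positivity
    have hXpos : 0 < X Y - x₀ := lt_of_lt_of_le (by positivity) hl
    set r := (X Y - x₀) / (A * s ^ 5) with hrdef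
    have hr : 0 < r := div_pos hXpos hAs
    have hXx : X Y - x₀ = A * s ^ 5 * r := by rw [hrdef, mul_div_cancel₀ _ hAs.ne']
    have hr1 : |r - 1| ≤ C₁ * s / A := by
      have he : r - 1 = (X Y - x₀ - A * s ^ 5) / (A * s ^ 5) := by
        field_simp [hrdef]
        rw [hXx]; ring
      rw [he, abs_div, abs_of_pos hAs]
      rw [div_le_div_iff₀ hAs hA]
      calc |X Y - x₀ - A * s ^ 5| * A ≤ (C₁ * s ^ 6) * A :=
            mul_le_mul_of_nonneg_right hb1 hA.le
        _ = C₁ * s * (A * s ^ 5) := by ring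
    have hrpow : (X Y - x₀) ^ ((4:ℝ)/5) = A ^ ((4:ℝ)/5) * s ^ 4 * r ^ ((4:ℝ)/5) := by
      rw [hXx, Real.mul_rpow hAs.le hr.le, Real.mul_rpow hA.le (by positivity)]
      congr 1
      congr 1
      rw [← Real.rpow_natCast s 5, ← Real.rpow_mul (by linarith : (0:ℝ) ≤ s)]
      rw [show ((5:ℕ) : ℝ) * ((4:ℝ)/5) = ((4:ℕ) : ℝ) by norm_num]
      exact Real.rpow_natCast s 4
    have hApow : A ^ (-(4:ℝ)/5) * A ^ ((4:ℝ)/5) = 1 := by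
      rw [← Real.rpow_add hA]; norm_num
    have heq : U Y - u₀ - B * A ^ (-(4:ℝ)/5) * (X Y - x₀) ^ ((4:ℝ)/5)
        = (U Y - u₀ - B * s ^ 4) - B * s ^ 4 * (r ^ ((4:ℝ)/5) - 1) := by
      rw [hrpow]
      linear_combination (-(B * s ^ 4 * r ^ ((4:ℝ)/5))) * hApow
    have hb2' : |U Y - u₀ - B * s ^ 4| ≤ C₂ * s ^ 5 := by
      rw [Real.norm_eq_abs, Real.norm_eq_abs] at hb2
      calc |U Y - u₀ - B * s ^ 4| ≤ C₂ * |s ^ 5| := hb2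
        _ = C₂ * s ^ 5 := by rw [abs_of_pos (by positivity)]
    have hterm2 : |B * s ^ 4 * (r ^ ((4:ℝ)/5) - 1)| ≤ |B| * s ^ 4 * (C₁ * s / A) := by
      rw [abs_mul, abs_mul, abs_of_pos (by positivity : (0:ℝ) < s ^ 4)]
      have h45 := le_trans (rpow_45_sub_one_abs hr) hr1
      have : (0:ℝ) ≤ |B| * s ^ 4 := by positivity
      calc |B| * s ^ 4 * |r ^ ((4:ℝ)/5) - 1| ≤ |B| * s ^ 4 * (C₁ * s / A) :=
        mul_le_mul_of_nonneg_left h45 this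
        _ = |B| * s ^ 4 * (C₁ * s / A) := rfl
    rw [Real.norm_eq_abs, Real.norm_eq_abs, heq, abs_of_pos hXpos]
    have habs : |(U Y - u₀ - B * s ^ 4) - B * s ^ 4 * (r ^ ((4:ℝ)/5) - 1)|
        ≤ C₂ * s ^ 5 + |B| * s ^ 4 * (C₁ * s / A) := by
      calc _ ≤ |U Y - u₀ - B * s ^ 4| + |B * s ^ 4 * (r ^ ((4:ℝ)/5) - 1)| :=
            abs_sub _ _
        _ ≤ _ := add_le_add hb2' hterm2
    have hsum : C₂ * s ^ 5 + |B| * s ^ 4 * (C₁ * s / A)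
        = (C₂ + |B| * C₁ / A) * s ^ 5 := by field_simp
    have hfin : (C₂ + |B| * C₁ / A) * s ^ 5 ≤ (C₂ + |B| * C₁ / A) * (2 / A) * (X Y - x₀) := by
      have hc : (0:ℝ) ≤ C₂ + |B| * C₁ / A := by positivity
      have : s ^ 5 ≤ (2 / A) * (X Y - x₀) := by
        rw [div_mul_eq_mul_div, le_div_iff₀ hA]
        have h2 := mul_le_mul_of_nonneg_left hl (by norm_num : (0:ℝ) ≤ 2)
        calc s ^ 5 * A = 2 * (A / 2 * s ^ 5) := by ring
          _ ≤ 2 * (X Y - x₀) := h2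
      calc (C₂ + |B| * C₁ / A) * s ^ 5
          ≤ (C₂ + |B| * C₁ / A) * ((2 / A) * (X Y - x₀)) :=
            mul_le_mul_of_nonneg_left this hc
        _ = (C₂ + |B| * C₁ / A) * (2 / A) * (X Y - x₀) := by ring
    calc |(U Y - u₀ - B * s ^ 4) - B * s ^ 4 * (r ^ ((4:ℝ)/5) - 1)|
        ≤ (C₂ + |B| * C₁ / A) * s ^ 5 := by rw [← hsum]; exact habs
      _ ≤ _ := hfin
end
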